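/- Let A be a unital associative ℂ-algebra, N ≥ 1, and u, v ∈ ℂ with u ≠ v, u ≠ −v, u ≠ v + 1 and u ≠ −(v+1). Suppose elements K_{i,j}(u), K_{i,j}(v) ∈ A (1 ≤ i,j ≤ N) satisfy the crossed reflection relation at (u,v): for all 1 ≤ i,j,k,l ≤ N, K_{i,j}(u)K_{k,l}(v) − K_{k,l}(v)K_{i,j}(u) = (u−v)⁻¹(K_{k,j}(u)K_{i,l}(v) − K_{k,j}(v)K_{i,l}(u)) − (u+v)⁻¹(K_{i,k}(u)K_{j,l}(v) − K_{k,i}(v)K_{l,j}(u)) + (u²−v²)⁻¹(K_{k,i}(u)K_{j,l}(v) − K_{k,i}(v)K_{j,l}(u)). Then K_{1,1}(u)K_{1,1}(v) = K_{1,1}(v)K_{1,1}(u). -/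
import Mathlib


/-- Commutativity part of Lemma C.1: the (1,1) entry of a crossed K-matrix at two
different spectral parameters commutes with itself. -/
theorem stmt_2 {A : Type*} [Ring A] [Algebra ℂ A]
    (N : ℕ) (hN : 1 ≤ N) (u v : ℂ)
    (h1 : u ≠ v) (h2 : u ≠ -v) (h3 : u ≠ v + 1) (h4 : u ≠ -(v + 1))
    (Ku Kv : Fin N → Fin N → A)
    (hrel : ∀ i j k l : Fin N,
      Ku i j * Kv k l - Kv k l * Ku i j =
        (u - v)⁻¹ • (Ku k j * Kv i l - Kv k j * Ku i l)
        - (u + v)⁻¹ • (Ku i k * Kv j l - Kv k i * Ku l j)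
        + (u ^ 2 - v ^ 2)⁻¹ • (Ku k i * Kv j l - Kv k i * Ku j l)) :
    Ku ⟨0, by omega⟩ ⟨0, by omega⟩ * Kv ⟨0, by omega⟩ ⟨0, by omega⟩ =
      Kv ⟨0, by omega⟩ ⟨0, by omega⟩ * Ku ⟨0, by omega⟩ ⟨0, by omega⟩ := by
  set z : Fin N := ⟨0, by omega⟩
  have h := hrel z z z z
  set X : A := Ku z z * Kv z z - Kv z z * Ku z z with hX
  set c : ℂ := (u - v)⁻¹ - (u + v)⁻¹ + (u ^ 2 - v ^ 2)⁻¹ with hc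
  have hXc : X = c • X := by
    rw [hc, add_smul, sub_smul]; exact h
  have huv : u - v ≠ 0 := sub_ne_zero.mpr h1
  have huv2 : u + v ≠ 0 := by
    intro h; exact h2 (by linear_combination h)
  have hsq : u ^ 2 - v ^ 2 ≠ 0 := by
    have : u ^ 2 - v ^ 2 = (u - v) * (u + v) := by ring
    rw [this]; exact mul_ne_zero huv huv2
  have hcne : (1 : ℂ) - c ≠ 0 := by
    intro hcz
    have hc1 : c = 1 := by linear_combination -hcz
    rw [hc] at hc1
    field_simp at hc1
    have hfac : (u ^ 2 - v ^ 2) * ((u - (v + 1)) * (u + (v + 1))) = 0 := by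
      linear_combination -hc1
    rcases mul_eq_zero.mp hfac with h' | h'
    · exact hsq h'
    · rcases mul_eq_zero.mp h' with h'' | h''
      · exact h3 (by linear_combination h'')
      · exact h4 (by linear_combination h'')
  have hzero : X = 0 := by
    have h0 : (1 - c) • X = 0 := by
      rw [sub_smul, one_smul, ← hXc]
      exact sub_self X
    have := congrArg (fun y => (1 - c)⁻¹ • y) h0
    simpa [smul_smul, inv_mul_cancel₀ hcne] using this
  have := sub_eq_zero.mp hzero
  exact this
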